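/- Let W be an affine Weyl group acting on alcoves, x, y ∈ W, s ∈ S with xs > x. Then I_{x,sy} ⊆ I_{xs,y}, where for u, v ∈ W, I_{u,v} is the set of positive roots α such that some hyperplane orthogonal to α separates both A_0 from vA_0 and vA_0 from uvA_0. -/

import Mathlib

namespace Stmt15

noncomputable section
open scoped RealInnerProductSpace

variable {r : ℕ}

/-- The coroot pairing `⟨x, α̌⟩ = 2(x,α)/(α,α)`. -/
def pairing (x α : EuclideanSpace ℝ (Fin r)) : ℝ := 2 * ⟪x, α⟫ / ⟪α, α⟫

/-- The union of the affine hyperplanes `H_{α,n}`, `α ∈ Φ⁺`, `n ∈ ℤ`. -/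
def hypUnion (Φp : Finset (EuclideanSpace ℝ (Fin r))) : Set (EuclideanSpace ℝ (Fin r)) :=
  {x | ∃ α ∈ Φp, ∃ n : ℤ, pairing x α = (n : ℝ)}

/-- An alcove is a connected component of the complement of the hyperplane arrangement. -/
def IsAlcove (Φp : Finset (EuclideanSpace ℝ (Fin r)))
    (A : Set (EuclideanSpace ℝ (Fin r))) : Prop :=
  ∃ x, x ∉ hypUnion Φp ∧ A = connectedComponentIn (hypUnion Φp)ᶜ x

/-- The hyperplane `H_{α,n}` separates the sets `A` and `A'`. -/
def Separates (α : EuclideanSpace ℝ (Fin r)) (n : ℤ)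
    (A A' : Set (EuclideanSpace ℝ (Fin r))) : Prop :=
  ((∀ x ∈ A, pairing x α < (n : ℝ)) ∧ (∀ x ∈ A', (n : ℝ) < pairing x α)) ∨
  ((∀ x ∈ A, (n : ℝ) < pairing x α) ∧ (∀ x ∈ A', pairing x α < (n : ℝ)))

/-- The fundamental alcove `A₀`. -/
def fundAlcove (Φp : Finset (EuclideanSpace ℝ (Fin r))) : Set (EuclideanSpace ℝ (Fin r)) :=
  {x | ∀ α ∈ Φp, 0 < pairing x α ∧ pairing x α < 1}

/-- `I_{x,y}`: the set of positive roots `α` such that some hyperplane orthogonal to `α`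
separates both `A₀` from `yA₀` and `yA₀` from `xyA₀`. -/
def Iset {B W : Type*} [Group W] {M : CoxeterMatrix B} (cs : CoxeterSystem M W)
    (Φp : Finset (EuclideanSpace ℝ (Fin r)))
    (e : W ≃ {A : Set (EuclideanSpace ℝ (Fin r)) // IsAlcove Φp A})
    (x y : W) : Set (EuclideanSpace ℝ (Fin r)) :=
  {α | α ∈ Φp ∧ ∃ n : ℤ,
    Separates α n (↑(e 1)) (↑(e y)) ∧ Separates α n (↑(e y)) (↑(e (x * y)))}

/-! Let `H = H_{β,n}` be a wall counted in `I_{x,sy}`. If `H` does not separate `yA₀` from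
`syA₀`, these two alcoves lie on the same side of `H`, and both conditions defining `I_{xs,y}`
follow. Otherwise `H` is the unique wall between the adjacent alcoves `yA₀` and `syA₀`, so the
affine reflection in `H` exchanges them; this reflection permutes the alcoves and preserves
adjacency. A gallery of length `ℓ(x)` from `syA₀` to `xsyA₀` crosses `H`; folding it back at its
first crossing and reflecting gives a gallery from `yA₀` to `xsyA₀` of length `< ℓ(x)`, so
`ℓ(xs) < ℓ(x)`, contradicting `xs > x`. -/

local notation "V" => EuclideanSpace ℝ (Fin r)

lemma existsUnique_of_involutive {ι : Type*} {P S S' : ι → Prop} (f : ι → ι)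
    (hfP : ∀ q, P q → P (f q)) (hff : ∀ q, P q → f (f q) = q) (hS : ∀ q, P q → (S' q ↔ S (f q)))
    (h : ∃! q, P q ∧ S q) : ∃! q, P q ∧ S' q := by
  obtain ⟨q₀, ⟨hP₀, hS₀⟩, huniq⟩ := h
  refine ⟨f q₀, ⟨hfP q₀ hP₀, (hS _ (hfP q₀ hP₀)).mpr (by rwa [hff q₀ hP₀])⟩, ?_⟩
  rintro q ⟨hPq, hSq⟩
  rw [← huniq (f q) ⟨hfP q hPq, (hS q hPq).mp hSq⟩, hff q hPq]

lemma pairing_smul_add_smul (a b α : V) (s t : ℝ) :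
    pairing (s • a + t • b) α = s * pairing a α + t * pairing b α := by
  simp only [pairing, inner_add_left, real_inner_smul_left]
  ring

lemma pairing_sub_smul (x y α : V) (c : ℝ) :
    pairing (x - c • y) α = pairing x α - c * pairing y α := by
  simp only [pairing, inner_sub_left, real_inner_smul_left]
  ring

lemma pairing_neg_left (x α : V) : pairing (-x) α = -pairing x α := by
  simp only [pairing, inner_neg_left]
  ring

lemma pairing_neg_right (x α : V) : pairing x (-α) = -pairing x α := by
  simp only [pairing, inner_neg_right, inner_neg_left, neg_neg]
  ring

lemma pairing_self {α : V} (hα : α ≠ 0) : pairing α α = 2 := by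
  rw [pairing, mul_div_assoc, div_self (inner_self_ne_zero.mpr hα), mul_one]

lemma continuous_pairing (α : V) : Continuous fun x : V => pairing x α := by
  unfold pairing
  fun_prop

/-- The reflection in the hyperplane `H_{α,c}`; `reflection α 0` is the linear reflection `s_α`. -/
def reflection (α : V) (c : ℝ) (x : V) : V := x - (pairing x α - c) • α

lemma pairing_reflection_self {α : V} (hα : α ≠ 0) (c : ℝ) (x : V) :
    pairing (reflection α c x) α = 2 * c - pairing x α := by
  rw [reflection, pairing_sub_smul, pairing_self hα]
  ring

lemma reflection_involutive {α : V} (hα : α ≠ 0) (c : ℝ) :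
    Function.Involutive (reflection α c) := by
  intro x
  rw [reflection, pairing_reflection_self hα, reflection]
  module

lemma reflection_of_pairing_eq {α x : V} {c : ℝ} (hx : pairing x α = c) : reflection α c x = x := by
  simp [reflection, hx]

lemma continuous_reflection (α : V) (c : ℝ) : Continuous (reflection α c) := by
  unfold reflection
  have := continuous_pairing α
  fun_prop

lemma reflection_zero_neg (α γ : V) : reflection α 0 (-γ) = -reflection α 0 γ := by
  rw [reflection, reflection, pairing_neg_left]
  module

lemma inner_reflection_zero_self {α : V} (hα : α ≠ 0) (γ : V) :
    ⟪reflection α 0 γ, reflection α 0 γ⟫ = ⟪γ, γ⟫ := by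
  have hαα : ⟪α, α⟫ ≠ 0 := inner_self_ne_zero.mpr hα
  simp only [reflection, sub_zero, pairing, real_inner_sub_sub_self, real_inner_smul_right,
    real_inner_smul_left]
  field_simp
  ring

lemma pairing_reflection {α : V} (hα : α ≠ 0) (c : ℝ) (x γ : V) :
    pairing (reflection α c x) γ = pairing x (reflection α 0 γ) + c * pairing α γ := by
  have hγ : pairing x (reflection α 0 γ) = 2 * ⟪x, reflection α 0 γ⟫ / ⟪γ, γ⟫ := by
    rw [pairing, inner_reflection_zero_self hα]
  rw [hγ, reflection, reflection, pairing_sub_smul]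
  simp only [pairing, sub_zero, inner_sub_right, real_inner_smul_right, real_inner_comm α γ]
  ring

lemma pairing_reflection_zero_right {α : V} (hα : α ≠ 0) (β : V) :
    pairing α (reflection α 0 β) = -pairing α β := by
  have h := pairing_reflection hα 0 α β
  rwa [zero_mul, add_zero, reflection, pairing_self hα, sub_zero, two_smul, sub_add_cancel_left,
    pairing_neg_left, eq_comm] at h

def wallForm (q : V × ℤ) (z : V) : ℝ := pairing z q.1 - q.2

lemma wallForm_neg (q : V × ℤ) (z : V) : wallForm (-q) z = -wallForm q z := by
  simp only [wallForm, Prod.fst_neg, Prod.snd_neg, pairing_neg_right, Int.cast_neg]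
  ring

lemma wallForm_smul_add_smul (q : V × ℤ) (a b : V) {s t : ℝ} (hst : s + t = 1) :
    wallForm q (s • a + t • b) = s * wallForm q a + t * wallForm q b := by
  rw [wallForm, wallForm, wallForm, pairing_smul_add_smul]
  linear_combination (q.2 : ℝ) * hst

lemma exists_mem_openSegment_wallForm_eq_zero {q : V × ℤ} {a b : V}
    (hab : wallForm q a * wallForm q b < 0) : ∃ z ∈ openSegment ℝ a b, wallForm q z = 0 := by
  have hne : wallForm q a - wallForm q b ≠ 0 := by
    intro h
    rw [sub_eq_zero.mp h] at hab
    linarith [mul_self_nonneg (wallForm q b)]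
  have hs : 0 < -wallForm q b / (wallForm q a - wallForm q b) :=
    div_pos_iff.mpr <|
      pos_and_pos_or_neg_and_neg_of_mul_pos (by nlinarith [sq_nonneg (wallForm q b)])
  have ht : 0 < wallForm q a / (wallForm q a - wallForm q b) :=
    div_pos_iff.mpr <|
      pos_and_pos_or_neg_and_neg_of_mul_pos (by nlinarith [sq_nonneg (wallForm q a)])
  have hst : -wallForm q b / (wallForm q a - wallForm q b) +
      wallForm q a / (wallForm q a - wallForm q b) = 1 := by
    field_simp
    ring
  refine ⟨_, ⟨_, _, hs, ht, hst, rfl⟩, ?_⟩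
  rw [wallForm_smul_add_smul q a b hst]
  field_simp
  ring

lemma mem_hypUnion_iff {Φp : Finset V} {z : V} :
    z ∈ hypUnion Φp ↔ ∃ q : V × ℤ, q.1 ∈ Φp ∧ wallForm q z = 0 := by
  simp [hypUnion, wallForm, sub_eq_zero]

lemma separates_comm {α : V} {n : ℤ} {A C : Set V} : Separates α n A C ↔ Separates α n C A := by
  unfold Separates
  tauto

lemma separates_iff_wallForm {q : V × ℤ} {A C : Set V} :
    Separates q.1 q.2 A C ↔ ((∀ a ∈ A, wallForm q a < 0) ∧ ∀ c ∈ C, 0 < wallForm q c) ∨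
      ((∀ a ∈ A, 0 < wallForm q a) ∧ ∀ c ∈ C, wallForm q c < 0) := by
  simp only [Separates, wallForm, sub_neg, sub_pos]

namespace IsAlcove

variable {Φp : Finset (EuclideanSpace ℝ (Fin r))} {A B C : Set (EuclideanSpace ℝ (Fin r))}
  {q : EuclideanSpace ℝ (Fin r) × ℤ}

lemma nonempty (hA : IsAlcove Φp A) : A.Nonempty := by
  obtain ⟨x, hx, rfl⟩ := hA
  exact ⟨x, mem_connectedComponentIn hx⟩

lemma wallForm_ne_zero (hA : IsAlcove Φp A) (hq : q.1 ∈ Φp) {a : V} (ha : a ∈ A) :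
    wallForm q a ≠ 0 := by
  obtain ⟨x, hx, rfl⟩ := hA
  exact fun h0 => connectedComponentIn_subset _ _ ha (mem_hypUnion_iff.mpr ⟨q, hq, h0⟩)

lemma wallForm_mul_pos (hA : IsAlcove Φp A) (hq : q.1 ∈ Φp) {a a' : V} (ha : a ∈ A)
    (ha' : a' ∈ A) : 0 < wallForm q a * wallForm q a' := by
  have hpre : IsPreconnected A := by
    obtain ⟨x, hx, rfl⟩ := hA
    exact isPreconnected_connectedComponentIn
  have hcont : ContinuousOn (wallForm q) A := by
    unfold wallForm
    exact ((continuous_pairing q.1).sub continuous_const).continuousOn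
  by_contra hle
  obtain ⟨z, hz, hz0⟩ : ∃ z ∈ A, wallForm q z = 0 := by
    rcases le_total (wallForm q a) (wallForm q a') with h | h
    · exact hpre.intermediate_value ha ha' hcont ⟨by nlinarith, by nlinarith⟩
    · exact hpre.intermediate_value ha' ha hcont ⟨by nlinarith, by nlinarith⟩
  exact hA.wallForm_ne_zero hq hz hz0

lemma separates_iff_mul_neg (hA : IsAlcove Φp A) (hC : IsAlcove Φp C) (hq : q.1 ∈ Φp)
    {a c : V} (ha : a ∈ A) (hc : c ∈ C) :
    Separates q.1 q.2 A C ↔ wallForm q a * wallForm q c < 0 := by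
  have hA' := fun (a' : V) (ha' : a' ∈ A) => hA.wallForm_mul_pos hq ha ha'
  have hC' := fun (c' : V) (hc' : c' ∈ C) => hC.wallForm_mul_pos hq hc hc'
  rw [separates_iff_wallForm]
  constructor
  · rintro (⟨h1, h2⟩ | ⟨h1, h2⟩)
    · exact mul_neg_of_neg_of_pos (h1 a ha) (h2 c hc)
    · exact mul_neg_of_pos_of_neg (h1 a ha) (h2 c hc)
  · intro h
    rcases (hA.wallForm_ne_zero hq ha).lt_or_gt with ha0 | ha0
    · exact Or.inl ⟨fun a' ha' => by nlinarith [hA' a' ha'],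
        fun c' hc' => by nlinarith [hC' c' hc']⟩
    · exact Or.inr ⟨fun a' ha' => by nlinarith [hA' a' ha'],
        fun c' hc' => by nlinarith [hC' c' hc']⟩

lemma not_separates_self (hA : IsAlcove Φp A) (hq : q.1 ∈ Φp) : ¬Separates q.1 q.2 A A := by
  obtain ⟨a, ha⟩ := hA.nonempty
  rw [hA.separates_iff_mul_neg hA hq ha ha, not_lt]
  exact mul_self_nonneg _

lemma separates_of_not_separates (hA : IsAlcove Φp A) (hB : IsAlcove Φp B) (hC : IsAlcove Φp C)
    (hq : q.1 ∈ Φp) (hAC : Separates q.1 q.2 A C) (hAB : ¬Separates q.1 q.2 A B) :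
    Separates q.1 q.2 B C := by
  obtain ⟨a, ha⟩ := hA.nonempty
  obtain ⟨b, hb⟩ := hB.nonempty
  obtain ⟨c, hc⟩ := hC.nonempty
  rw [hA.separates_iff_mul_neg hC hq ha hc] at hAC
  rw [hA.separates_iff_mul_neg hB hq ha hb, not_lt] at hAB
  rw [hB.separates_iff_mul_neg hC hq hb hc]
  have hb2 : 0 < wallForm q b ^ 2 := sq_pos_of_ne_zero (hB.wallForm_ne_zero hq hb)
  by_contra! hBC
  nlinarith [mul_nonneg hAB hBC, mul_neg_of_pos_of_neg hb2 hAC]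

lemma eq_of_mem (hA : IsAlcove Φp A) (hC : IsAlcove Φp C) {z : V} (hzA : z ∈ A)
    (hzC : z ∈ C) : A = C := by
  obtain ⟨a, -, rfl⟩ := hA
  obtain ⟨c, -, rfl⟩ := hC
  rw [connectedComponentIn_eq hzA, connectedComponentIn_eq hzC]

lemma mem_of_wallForm_mul_pos (hA : IsAlcove Φp A) {a z : V} (ha : a ∈ A)
    (h : ∀ q : V × ℤ, q.1 ∈ Φp → 0 < wallForm q a * wallForm q z) : z ∈ A := by
  obtain ⟨x, -, rfl⟩ := hA
  have hseg : segment ℝ a z ⊆ (hypUnion Φp)ᶜ := by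
    rintro w ⟨s, t, hs, ht, hst, rfl⟩ hw
    obtain ⟨q, hq, hq0⟩ := mem_hypUnion_iff.mp hw
    have haz := h q hq
    rw [wallForm_smul_add_smul q a z hst] at hq0
    have ha2 : 0 < wallForm q a * wallForm q a := mul_self_pos.mpr (left_ne_zero_of_mul haz.ne')
    have hsum : s * (wallForm q a * wallForm q a) + t * (wallForm q a * wallForm q z) = 0 := by
      linear_combination wallForm q a * hq0
    rcases hs.eq_or_lt with rfl | hs
    · nlinarith
    · nlinarith [mul_pos hs ha2, mul_nonneg ht haz.le]
  rw [connectedComponentIn_eq ha]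
  exact (convex_segment a z).isPreconnected.subset_connectedComponentIn (left_mem_segment ℝ a z)
    hseg (right_mem_segment ℝ a z)

end IsAlcove

structure IsPositiveSystem (Φp : Finset V) : Prop where
  ne_zero : ∀ α ∈ Φp, α ≠ 0
  pairing_eq_intCast : ∀ α ∈ Φp, ∀ β ∈ Φp, ∃ k : ℤ, pairing β α = k
  reflection_mem : ∀ α ∈ Φp, ∀ β ∈ Φp, reflection α 0 β ∈ Φp ∨ -reflection α 0 β ∈ Φp
  neg_not_mem : ∀ α ∈ Φp, -α ∉ Φp

lemma IsPositiveSystem.of_linearForm {Φ Φp : Finset V} (hΦp : (Φp : Set V) ⊆ Φ) (h0 : (0 : V) ∉ Φ)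
    (hneg : ∀ α ∈ Φ, -α ∈ Φ) (hcrys : ∀ α ∈ Φ, ∀ β ∈ Φ, ∃ k : ℤ, pairing β α = k)
    (hrefl : ∀ α ∈ Φ, ∀ β ∈ Φ, β - pairing β α • α ∈ Φ) (f : V →ₗ[ℝ] ℝ)
    (hf0 : ∀ α ∈ Φ, f α ≠ 0) (hfP : ∀ α ∈ Φ, α ∈ Φp ↔ 0 < f α) : IsPositiveSystem Φp where
  ne_zero α hα h := h0 (h ▸ hΦp hα)
  pairing_eq_intCast α hα β hβ := hcrys α (hΦp hα) β (hΦp hβ)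
  reflection_mem α hα β hβ := by
    have hmem : reflection α 0 β ∈ Φ := by
      simpa only [reflection, sub_zero] using hrefl α (hΦp hα) β (hΦp hβ)
    rcases (hf0 _ hmem).lt_or_gt with h | h
    · exact Or.inr ((hfP _ (hneg _ hmem)).mpr (by rw [map_neg]; linarith))
    · exact Or.inl ((hfP _ hmem).mpr h)
  neg_not_mem α hα h := by
    have h1 := (hfP α (hΦp hα)).mp hα
    have h2 := (hfP _ (hneg α (hΦp hα))).mp h
    rw [map_neg] at h2
    linarith

/-- The image of the wall `H_{q.1, q.2}` under `reflection α n`, when `pairing α q.1` is an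
integer; its root need not be positive. -/
def reflectWall (α : V) (n : ℤ) (q : V × ℤ) : V × ℤ :=
  (reflection α 0 q.1, q.2 - n * ⌊pairing α q.1⌋)

lemma reflectWall_neg (α : V) (n : ℤ) {q : V × ℤ} (hk : ∃ k : ℤ, pairing α q.1 = k) :
    reflectWall α n (-q) = -reflectWall α n q := by
  obtain ⟨k, hk⟩ := hk
  simp only [reflectWall, Prod.fst_neg, Prod.snd_neg, reflection_zero_neg, pairing_neg_right, hk,
    ← Int.cast_neg, Int.floor_intCast, Prod.neg_mk]
  congr 1
  ring

lemma reflectWall_reflectWall {α : V} (hα : α ≠ 0) (n : ℤ) {q : V × ℤ}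
    (hk : ∃ k : ℤ, pairing α q.1 = k) : reflectWall α n (reflectWall α n q) = q := by
  obtain ⟨k, hk⟩ := hk
  simp only [reflectWall, reflection_involutive hα 0 q.1, pairing_reflection_zero_right hα, hk,
    ← Int.cast_neg, Int.floor_intCast]
  ext <;> simp only
  ring

open Classical in
def wallImage (Φp : Finset V) (α : V) (n : ℤ) (q : V × ℤ) : V × ℤ :=
  if (reflectWall α n q).1 ∈ Φp then reflectWall α n q else -reflectWall α n q

def Adjacent (Φp : Finset V) (A C : Set V) : Prop :=
  ∃! q : V × ℤ, q.1 ∈ Φp ∧ Separates q.1 q.2 A C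

namespace IsPositiveSystem

variable {Φp : Finset (EuclideanSpace ℝ (Fin r))} {α : EuclideanSpace ℝ (Fin r)}
  {q : EuclideanSpace ℝ (Fin r) × ℤ} {A C : Set (EuclideanSpace ℝ (Fin r))}

lemma wallForm_reflection (hP : IsPositiveSystem Φp) (hα : α ∈ Φp) (hq : q.1 ∈ Φp) (n : ℤ)
    (z : V) : wallForm q (reflection α n z) = wallForm (reflectWall α n q) z := by
  obtain ⟨k, hk⟩ := hP.pairing_eq_intCast q.1 hq α hα
  simp only [wallForm, reflectWall, pairing_reflection (hP.ne_zero α hα), hk, Int.floor_intCast]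
  push_cast
  ring

lemma wallImage_mem (hP : IsPositiveSystem Φp) (hα : α ∈ Φp) (hq : q.1 ∈ Φp) (n : ℤ) :
    (wallImage Φp α n q).1 ∈ Φp := by
  unfold wallImage
  split_ifs with h
  · exact h
  · exact (hP.reflection_mem α hα q.1 hq).resolve_left h

lemma wallImage_wallImage (hP : IsPositiveSystem Φp) (hα : α ∈ Φp) (hq : q.1 ∈ Φp) (n : ℤ) :
    wallImage Φp α n (wallImage Φp α n q) = q := by
  have hα0 := hP.ne_zero α hα
  have hk := hP.pairing_eq_intCast q.1 hq α hα
  have hk' : ∃ k : ℤ, pairing α (reflectWall α n q).1 = k := by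
    obtain ⟨k, hk⟩ := hk
    exact ⟨-k, by rw [reflectWall, pairing_reflection_zero_right hα0, hk, Int.cast_neg]⟩
  have hneg : (-q).1 ∉ Φp := hP.neg_not_mem q.1 hq
  by_cases h : (reflectWall α n q).1 ∈ Φp
  · simp only [wallImage, if_pos h, reflectWall_reflectWall hα0 n hk, if_pos hq]
  · simp only [wallImage, if_neg h, reflectWall_neg α n hk', reflectWall_reflectWall hα0 n hk,
      if_neg hneg, neg_neg]

lemma wallImage_self (hP : IsPositiveSystem Φp) (hα : α ∈ Φp) (n : ℤ) :
    wallImage Φp α n (α, n) = (α, n) := by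
  have hα0 := hP.ne_zero α hα
  have hrefl : reflectWall α n (α, n) = -(α, n) := by
    simp only [reflectWall, reflection, pairing_self hα0, Prod.neg_mk]
    congr 1
    · module
    · ring
  rw [wallImage, hrefl, if_neg (show (-(α, n)).1 ∉ Φp from hP.neg_not_mem α hα), neg_neg]

lemma wallForm_wallImage_mul (hP : IsPositiveSystem Φp) (hα : α ∈ Φp) (hq : q.1 ∈ Φp) (n : ℤ)
    (z z' : V) :
    wallForm (wallImage Φp α n q) z * wallForm (wallImage Φp α n q) z' =
      wallForm q (reflection α n z) * wallForm q (reflection α n z') := by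
  rw [hP.wallForm_reflection hα hq, hP.wallForm_reflection hα hq, wallImage]
  split_ifs
  · rfl
  · rw [wallForm_neg, wallForm_neg, neg_mul_neg]

lemma reflection_mem_hypUnion_iff (hP : IsPositiveSystem Φp) (hα : α ∈ Φp) (n : ℤ) {z : V} :
    reflection α n z ∈ hypUnion Φp ↔ z ∈ hypUnion Φp := by
  have key : ∀ z : V, reflection α n z ∈ hypUnion Φp → z ∈ hypUnion Φp := by
    intro z hz
    obtain ⟨q, hq, h0⟩ := mem_hypUnion_iff.mp hz
    have h := hP.wallForm_wallImage_mul hα hq n z z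
    rw [h0, zero_mul, mul_self_eq_zero] at h
    exact mem_hypUnion_iff.mpr ⟨_, hP.wallImage_mem hα hq n, h⟩
  refine ⟨key z, fun hz => key _ ?_⟩
  rwa [reflection_involutive (hP.ne_zero α hα)]

lemma isAlcove_image_reflection (hP : IsPositiveSystem Φp) (hα : α ∈ Φp) (n : ℤ)
    (hA : IsAlcove Φp A) : IsAlcove Φp (reflection α n '' A) := by
  obtain ⟨x, hx, rfl⟩ := hA
  have hinv := reflection_involutive (hP.ne_zero α hα) n
  let ρ : V ≃ₜ V :=
    { toFun := reflection α n
      invFun := reflection α n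
      left_inv := hinv
      right_inv := hinv
      continuous_toFun := continuous_reflection α n
      continuous_invFun := continuous_reflection α n }
  have hcompl : ρ '' (hypUnion Φp)ᶜ = (hypUnion Φp)ᶜ := by
    rw [ρ.image_eq_preimage_symm]
    ext z
    exact not_congr (hP.reflection_mem_hypUnion_iff hα n)
  refine ⟨ρ x, fun h => hx ((hP.reflection_mem_hypUnion_iff hα n).mp h), ?_⟩
  have h := ρ.image_connectedComponentIn (s := (hypUnion Φp)ᶜ) hx
  rwa [hcompl] at h

lemma separates_image_reflection_iff (hP : IsPositiveSystem Φp) (hα : α ∈ Φp) (n : ℤ)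
    (hA : IsAlcove Φp A) (hC : IsAlcove Φp C) (hq : q.1 ∈ Φp) :
    Separates q.1 q.2 (reflection α n '' A) (reflection α n '' C) ↔
      Separates (wallImage Φp α n q).1 (wallImage Φp α n q).2 A C := by
  obtain ⟨a, ha⟩ := hA.nonempty
  obtain ⟨c, hc⟩ := hC.nonempty
  rw [(hP.isAlcove_image_reflection hα n hA).separates_iff_mul_neg
      (hP.isAlcove_image_reflection hα n hC) hq (Set.mem_image_of_mem _ ha)
      (Set.mem_image_of_mem _ hc),
    hA.separates_iff_mul_neg hC (hP.wallImage_mem hα hq n) ha hc,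
    hP.wallForm_wallImage_mul hα hq]

lemma adjacent_image_reflection (hP : IsPositiveSystem Φp) (hα : α ∈ Φp) (n : ℤ)
    (hA : IsAlcove Φp A) (hC : IsAlcove Φp C) (h : Adjacent Φp A C) :
    Adjacent Φp (reflection α n '' A) (reflection α n '' C) :=
  existsUnique_of_involutive (wallImage Φp α n) (fun _ hq => hP.wallImage_mem hα hq n)
    (fun _ hq => hP.wallImage_wallImage hα hq n)
    (fun _ hq => hP.separates_image_reflection_iff hα n hA hC hq) h

lemma image_reflection_eq_of_adjacent (hP : IsPositiveSystem Φp) (hα : α ∈ Φp) (n : ℤ)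
    (hA : IsAlcove Φp A) (hC : IsAlcove Φp C) (hadj : Adjacent Φp A C)
    (hsep : Separates α n A C) : reflection α n '' C = A := by
  set p : V × ℤ := (α, n)
  obtain ⟨a, ha⟩ := hA.nonempty
  obtain ⟨b, hb⟩ := hC.nonempty
  have hab : wallForm p a * wallForm p b < 0 := (hA.separates_iff_mul_neg hC hα ha hb).mp hsep
  obtain ⟨z, ⟨s, t, hs, ht, hst, hzdef⟩, hzp⟩ := exists_mem_openSegment_wallForm_eq_zero hab
  have hz : ∀ q : V × ℤ, wallForm q z = s * wallForm q a + t * wallForm q b :=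
    fun q => hzdef ▸ wallForm_smul_add_smul q a b hst
  have hρz : reflection α n z = z := by
    apply reflection_of_pairing_eq
    simpa [wallForm, sub_eq_zero] using hzp
  have hside : ∀ q : V × ℤ, q.1 ∈ Φp → q ≠ p →
      0 < wallForm q a * wallForm q z ∧ 0 < wallForm q b * wallForm q z := by
    intro q hq hqp
    have hnsep : ¬Separates q.1 q.2 A C := fun hs => hqp (hadj.unique ⟨hq, hs⟩ ⟨hα, hsep⟩)
    rw [hA.separates_iff_mul_neg hC hq ha hb, not_lt] at hnsep
    have hpos := lt_of_le_of_ne hnsep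
      (mul_ne_zero (hA.wallForm_ne_zero hq ha) (hC.wallForm_ne_zero hq hb)).symm
    rw [hz]
    constructor <;> nlinarith [mul_pos hs hpos, mul_pos ht hpos,
      sq_pos_of_ne_zero (hA.wallForm_ne_zero hq ha), sq_pos_of_ne_zero (hC.wallForm_ne_zero hq hb)]
  -- `z` lies on no other wall and is fixed by the reflection, so across every wall the image of
  -- `b` lies on the side of `z`, which is that of `a`
  have hρb : reflection α n b ∈ A := by
    refine hA.mem_of_wallForm_mul_pos ha fun q hq => ?_
    by_cases hqp : q = p
    · have hflip : wallForm p (reflection α n b) = -wallForm p b := by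
        change pairing (reflection α n b) α - n = -(pairing b α - n)
        rw [pairing_reflection_self (hP.ne_zero α hα)]
        ring
      rw [hqp, hflip]
      linarith
    · have hq' : wallImage Φp α n q ≠ p := fun h =>
        hqp (by rw [← hP.wallImage_wallImage hα hq n, h, hP.wallImage_self hα n])
      have h1 := (hside q hq hqp).1
      have h2 := (hside _ (hP.wallImage_mem hα hq n) hq').2
      rw [hP.wallForm_wallImage_mul hα hq, hρz] at h2
      nlinarith [mul_pos h1 h2, sq_nonneg (wallForm q z)]
  exact ((hP.isAlcove_image_reflection hα n hC).eq_of_mem hA (Set.mem_image_of_mem _ hb) hρb)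

end IsPositiveSystem

inductive Gallery {W : Type*} (adj : W → W → Prop) : W → W → ℕ → Prop
  | refl (v : W) : Gallery adj v v 0
  | cons {u v w : W} {k : ℕ} : adj u v → Gallery adj v w k → Gallery adj u w (k + 1)

namespace Gallery

variable {W : Type*} {adj : W → W → Prop} {u v w : W} {k : ℕ}

lemma snoc (h : Gallery adj u v k) (hvw : adj v w) : Gallery adj u w (k + 1) := by
  induction h with
  | refl => exact .cons hvw (.refl w)
  | cons huv _ ih => exact .cons huv (ih hvw)

lemma map {ρ : W → W} (hρ : ∀ a b, adj a b → adj (ρ a) (ρ b)) (h : Gallery adj v w k) :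
    Gallery adj (ρ v) (ρ w) k := by
  induction h with
  | refl => exact .refl _
  | cons huv _ ih => exact .cons (hρ _ _ huv) ih

/-- A gallery whose endpoints lie on opposite sides of a wall (`sep`) becomes strictly shorter
when its part beyond the first crossing is folded back by the reflection `ρ` in that wall. -/
lemma fold {sep : W → W → Prop} {ρ : W → W} (hρ : ∀ a b, adj a b → adj (ρ a) (ρ b))
    (hcross : ∀ a b, adj a b → sep a b → ρ b = a)
    (hirrefl : ∀ a, ¬sep a a) (hsep : ∀ a b c, sep a c → ¬sep a b → sep b c)
    (h : Gallery adj v w k) (hvw : sep v w) :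
    ∃ k' < k, Gallery adj v (ρ w) k' := by
  induction h with
  | refl => exact absurd hvw (hirrefl _)
  | @cons u v w k huv hvw' ih =>
    by_cases huv' : sep u v
    · have h := hvw'.map hρ
      rw [hcross u v huv huv'] at h
      exact ⟨k, k.lt_succ_self, h⟩
    · obtain ⟨k', hk', h⟩ := ih (hsep u v w hvw huv')
      exact ⟨k' + 1, by omega, .cons huv h⟩

end Gallery

section Coxeter

variable {B W : Type*} [Group W] {M : CoxeterMatrix B} (cs : CoxeterSystem M W)
  {adj : W → W → Prop}

lemma gallery_wordProd_mul (hstep : ∀ (i : B) (w : W), adj w (cs.simple i * w)) (ω : List B)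
    (v : W) : Gallery adj v (cs.wordProd ω * v) ω.length := by
  induction ω with
  | nil => simpa using Gallery.refl v
  | cons j ω ih =>
    simpa [cs.wordProd_cons, mul_assoc] using ih.snoc (hstep j (cs.wordProd ω * v))

lemma Gallery.length_mul_inv_le (hstep : ∀ a b, adj a b → ∃ i : B, b = cs.simple i * a)
    {v w : W} {k : ℕ} (h : Gallery adj v w k) : cs.length (w * v⁻¹) ≤ k := by
  induction h with
  | refl => simp
  | @cons u v w k huv _ ih =>
    obtain ⟨i, rfl⟩ := hstep u v huv
    calc cs.length (w * u⁻¹) = cs.length (w * (cs.simple i * u)⁻¹ * cs.simple i) := by group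
      _ ≤ cs.length (w * (cs.simple i * u)⁻¹) + cs.length (cs.simple i) := cs.length_mul_le _ _
      _ ≤ k + 1 := by rw [cs.length_simple]; omega

end Coxeter

namespace IsPositiveSystem

variable {Φp : Finset (EuclideanSpace ℝ (Fin r))} {α : EuclideanSpace ℝ (Fin r)} {W : Type*}

lemma exists_involutive_reflection (hP : IsPositiveSystem Φp)
    (e : W ≃ {A : Set V // IsAlcove Φp A}) (hα : α ∈ Φp) (n : ℤ) :
    ∃ ρ : W → W, Function.Involutive ρ ∧
      (∀ a b, Adjacent Φp (e a) (e b) → Adjacent Φp (e (ρ a)) (e (ρ b))) ∧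
      ∀ a b, Adjacent Φp (e a) (e b) → Separates α n (e a) (e b) → ρ b = a := by
  let ρ : W → W := fun w =>
    e.symm ⟨reflection α n '' e w, hP.isAlcove_image_reflection hα n (e w).2⟩
  have he : ∀ w, (e (ρ w) : Set V) = reflection α n '' e w := by simp [ρ]
  refine ⟨ρ, fun w => e.injective (Subtype.ext ?_), fun a b h => ?_, fun a b h hs => ?_⟩
  · rw [he, he, Set.image_image]
    simp only [reflection_involutive (hP.ne_zero α hα) n _, Set.image_id']
  · rw [he, he]
    exact hP.adjacent_image_reflection hα n (e a).2 (e b).2 h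
  · refine e.injective (Subtype.ext ?_)
    rw [he]
    exact hP.image_reflection_eq_of_adjacent hα n (e a).2 (e b).2 h hs

lemma length_mul_simple_lt_of_separates {B : Type*} [Group W] {M : CoxeterMatrix B}
    (cs : CoxeterSystem M W) (hP : IsPositiveSystem Φp)
    (e : W ≃ {A : Set V // IsAlcove Φp A})
    (hadj : ∀ (i : B) (w : W), Adjacent Φp (e w) (e (cs.simple i * w)))
    (hadj' : ∀ w u : W, Adjacent Φp (e w) (e u) → ∃ i : B, u = cs.simple i * w)
    (hα : α ∈ Φp) (n : ℤ) {x y : W} {i : B}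
    (hy : Separates α n (e y) (e (cs.simple i * y)))
    (hxy : Separates α n (e (cs.simple i * y)) (e (x * (cs.simple i * y)))) :
    cs.length (x * cs.simple i) < cs.length x := by
  obtain ⟨ρ, hρ, hmap, hcross⟩ := hP.exists_involutive_reflection e hα n
  obtain ⟨ω, hω, rfl⟩ := cs.exists_isReduced x
  have hsep : ∀ a b c : W, Separates α n (e a) (e c) → ¬Separates α n (e a) (e b) →
      Separates α n (e b) (e c) := fun a b c =>
    (e a).2.separates_of_not_separates (q := (α, n)) (e b).2 (e c).2 hα
  obtain ⟨k, hk, hfold⟩ := (gallery_wordProd_mul cs hadj ω (cs.simple i * y)).fold hmap hcross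
    (fun a => (e a).2.not_separates_self (q := (α, n)) hα) hsep hxy
  have hgal := hfold.map hmap
  rw [hcross y _ (hadj i y) hy, hρ] at hgal
  have hlen := hgal.length_mul_inv_le cs hadj'
  rw [show cs.wordProd ω * (cs.simple i * y) * y⁻¹ = cs.wordProd ω * cs.simple i by group] at hlen
  rw [hω.eq]
  omega

end IsPositiveSystem

theorem stmt15 {B W : Type*} [Group W] {M : CoxeterMatrix B} (cs : CoxeterSystem M W)
    (Φ Φp : Finset (EuclideanSpace ℝ (Fin r)))
    (hΦp : ↑Φp ⊆ (Φ : Set (EuclideanSpace ℝ (Fin r))))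
    (h0 : (0 : EuclideanSpace ℝ (Fin r)) ∉ Φ)
    (hneg : ∀ α ∈ Φ, -α ∈ Φ)
    (hcrys : ∀ α ∈ Φ, ∀ β ∈ Φ, ∃ k : ℤ, pairing β α = (k : ℝ))
    (hrefl : ∀ α ∈ Φ, ∀ β ∈ Φ, β - pairing β α • α ∈ Φ)
    (hpos : ∃ f : EuclideanSpace ℝ (Fin r) →ₗ[ℝ] ℝ,
      (∀ α ∈ Φ, f α ≠ 0) ∧ ∀ α ∈ Φ, (α ∈ Φp ↔ 0 < f α))
    (e : W ≃ {A : Set (EuclideanSpace ℝ (Fin r)) // IsAlcove Φp A})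
    (hadj : ∀ (i : B) (w : W), ∃! q : EuclideanSpace ℝ (Fin r) × ℤ,
      q.1 ∈ Φp ∧ Separates q.1 q.2 (↑(e w)) (↑(e (cs.simple i * w))))
    (hadj' : ∀ w u : W, (∃! q : EuclideanSpace ℝ (Fin r) × ℤ,
      q.1 ∈ Φp ∧ Separates q.1 q.2 (↑(e w)) (↑(e u))) → ∃ i : B, u = cs.simple i * w)
    (x y : W) (i : B)
    (hxs : cs.length (x * cs.simple i) = cs.length x + 1) :
    Iset cs Φp e x (cs.simple i * y) ⊆ Iset cs Φp e (x * cs.simple i) y := by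
  obtain ⟨f, hf0, hfP⟩ := hpos
  have hP := IsPositiveSystem.of_linearForm hΦp h0 hneg hcrys hrefl f hf0 hfP
  rintro β ⟨hβ, n, h1, h2⟩
  have halc : ∀ w : W, IsAlcove Φp (e w) := fun w => (e w).2
  by_cases hy : Separates β n (e y) (e (cs.simple i * y))
  · have := hP.length_mul_simple_lt_of_separates cs e hadj hadj' hβ n hy h2
    omega
  · rw [separates_comm] at hy
    refine ⟨hβ, n, ?_, ?_⟩
    · exact separates_comm.mp <| (halc _).separates_of_not_separates (q := (β, n)) (halc y)
        (halc 1) hβ (separates_comm.mp h1) hy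
    · rw [mul_assoc]
      exact (halc _).separates_of_not_separates (q := (β, n)) (halc y) (halc _) hβ h2 hy

end

end Stmt15
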